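/- Let n, f be natural numbers with n > 5f, let P be a multiset of n real numbers, and let U be a submultiset of P of cardinality m with m ≥ n − f. If min U < max U, then dest(P, min U) > min U or dest(P, max U) < max U; that is, whenever the correct robots are not all at the same location, at least one of the two extreme correct robots computes a destination different from its current position. (Non-triviality of Algorithm 1.) -/

import Mathlib

/-!
At most `n - m ≤ f` observed positions lie outside `U`, so at most `f` of them lie strictly
below `min U` or strictly above `max U`. Hence the trimmed order statistics satisfy
`min U ≤ P_{2f+1} ≤ P_{n-2f} ≤ max U`. The robot at `min U` then stays put only if
`P_{n-2f} = min U`, and the robot at `max U` only if `P_{2f+1} = max U`; both together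
would give `max U ≤ min U`.
-/

/-- `kth P k` is the `k`-th smallest element (1-based, counted with multiplicity)
of the multiset `P` of reals. -/
noncomputable def kth (P : Multiset ℝ) (k : ℕ) : ℝ :=
  (P.sort (· ≤ ·)).getD (k - 1) 0

/-- The minimum of a (nonempty) multiset of reals: its 1st smallest element. -/
noncomputable def mmin (U : Multiset ℝ) : ℝ := kth U 1

/-- The maximum of a (nonempty) multiset of reals: its `card`-th smallest element. -/
noncomputable def mmax (U : Multiset ℝ) : ℝ := kth U (Multiset.card U)

/-- The destination computed by Algorithm 1 by a robot at position `p` observing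
the configuration `P` of `n` robots (at most `f` Byzantine): the midpoint of the
trimmed range `[min(p, P_{2f+1}), max(p, P_{n-2f})]`. -/
noncomputable def dest (n f : ℕ) (P : Multiset ℝ) (p : ℝ) : ℝ :=
  (min p (kth P (2 * f + 1)) + max p (kth P (n - 2 * f))) / 2

namespace List.SortedLE

variable {α : Type*} [Preorder α] [DecidableLE α] {l : List α}

theorem succ_le_countP_le_getElem (hl : l.SortedLE) {i : ℕ} (hi : i < l.length) :
    i + 1 ≤ l.countP (fun x => x ≤ l[i]) := by
  have htake : (l.take (i + 1)).countP (fun x => x ≤ l[i]) = i + 1 := by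
    rw [List.countP_eq_length.mpr, List.length_take_of_le hi]
    intro x hx
    obtain ⟨j, hj, rfl⟩ := List.mem_iff_getElem.mp hx
    rw [List.length_take_of_le hi] at hj
    simpa using hl.getElem_le_getElem_of_le (by omega : j ≤ i)
  exact htake ▸ (l.take_sublist _).countP_le

theorem length_sub_le_countP_getElem_le (hl : l.SortedLE) {i : ℕ} (hi : i < l.length) :
    l.length - i ≤ l.countP (fun x => l[i] ≤ x) := by
  have hdrop : (l.drop i).countP (fun x => l[i] ≤ x) = l.length - i := by
    rw [List.countP_eq_length.mpr, List.length_drop]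
    intro x hx
    obtain ⟨j, hj, rfl⟩ := List.mem_iff_getElem.mp hx
    simpa using hl.getElem_le_getElem_of_le (by omega : i ≤ i + j)
  exact hdrop ▸ (l.drop_sublist _).countP_le

end List.SortedLE

open Multiset

theorem Multiset.countP_sort {α : Type*} (r : α → α → Prop) [DecidableRel r] [IsTrans α r]
    [Std.Antisymm r] [Std.Total r] (s : Multiset α) (p : α → Prop) [DecidablePred p] :
    (s.sort r).countP (fun x => p x) = s.countP p := by
  conv_rhs => rw [← sort_eq s r, coe_countP]

theorem Multiset.countP_lt_card_of_mem {α : Type*} {s : Multiset α} {p : α → Prop}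
    [DecidablePred p] {x : α} (hx : x ∈ s) (hpx : ¬p x) : s.countP p < card s := by
  rw [card_eq_countP_add_countP p s]
  have := countP_pos_of_mem (p := fun y => ¬p y) hx hpx
  omega

theorem Multiset.countP_le_card_sub_of_le {α : Type*} [DecidableEq α] {s t : Multiset α}
    {p : α → Prop} [DecidablePred p] (hts : t ≤ s) (ht : ∀ x ∈ t, ¬p x) :
    s.countP p ≤ card s - card t := by
  calc s.countP p = (s - t).countP p + t.countP p := by
        rw [← countP_add, tsub_add_cancel_of_le hts]
    _ = (s - t).countP p := by rw [countP_eq_zero.mpr ht, add_zero]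
    _ ≤ card s - card t := card_sub hts ▸ countP_le_card _ _

section OrderStatistics

variable {P : Multiset ℝ} {k : ℕ}

theorem kth_eq_getElem (hk : 1 ≤ k) (hkP : k ≤ card P) :
    kth P k = (P.sort (· ≤ ·))[k - 1]'(by rw [length_sort]; omega) :=
  List.getD_eq_getElem _ _ _

theorem kth_mono {i j : ℕ} (hi : 1 ≤ i) (hij : i ≤ j) (hjP : j ≤ card P) :
    kth P i ≤ kth P j := by
  rw [kth_eq_getElem hi (hij.trans hjP), kth_eq_getElem (hi.trans hij) hjP]
  exact (pairwise_sort P _).sortedLE.getElem_le_getElem_of_le (by omega)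

theorem le_kth_of_countP_lt {a : ℝ} (hk : 1 ≤ k) (hkP : k ≤ card P)
    (h : P.countP (· < a) < k) : a ≤ kth P k := by
  by_contra! hlt
  have hsorted := (pairwise_sort P (· ≤ ·)).sortedLE
  have hi : k - 1 < (P.sort (· ≤ ·)).length := by rw [length_sort]; omega
  have hcount := hsorted.succ_le_countP_le_getElem hi
  rw [← kth_eq_getElem hk hkP] at hcount
  have hmono : (P.sort (· ≤ ·)).countP (fun x => x ≤ kth P k) ≤ P.countP (· < a) := by
    rw [← countP_sort (· ≤ ·)]
    exact List.countP_mono_left fun x _ hx => by simpa using (of_decide_eq_true hx).trans_lt hlt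
  omega

theorem kth_le_of_countP_lt {b : ℝ} (hk : 1 ≤ k) (hkP : k ≤ card P)
    (h : P.countP (b < ·) < card P + 1 - k) : kth P k ≤ b := by
  by_contra! hlt
  have hsorted := (pairwise_sort P (· ≤ ·)).sortedLE
  have hi : k - 1 < (P.sort (· ≤ ·)).length := by rw [length_sort]; omega
  have hcount := hsorted.length_sub_le_countP_getElem_le hi
  rw [← kth_eq_getElem hk hkP, length_sort] at hcount
  have hmono : (P.sort (· ≤ ·)).countP (fun x => kth P k ≤ x) ≤ P.countP (b < ·) := by
    rw [← countP_sort (· ≤ ·)]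
    exact List.countP_mono_left fun x _ hx => by simpa using hlt.trans_le (of_decide_eq_true hx)
  omega

theorem mmin_le_of_mem {U : Multiset ℝ} {x : ℝ} (hx : x ∈ U) : mmin U ≤ x :=
  have hU : 1 ≤ card U := card_pos_iff_exists_mem.mpr ⟨x, hx⟩
  kth_le_of_countP_lt le_rfl hU <| by
    simpa using countP_lt_card_of_mem (p := (x < ·)) hx (lt_irrefl x)

theorem le_mmax_of_mem {U : Multiset ℝ} {x : ℝ} (hx : x ∈ U) : x ≤ mmax U :=
  have hU : 1 ≤ card U := card_pos_iff_exists_mem.mpr ⟨x, hx⟩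
  le_kth_of_countP_lt hU le_rfl (countP_lt_card_of_mem hx (lt_irrefl x))

end OrderStatistics

theorem stmt_5 (n f : ℕ) (hnf : n > 5 * f) (P U : Multiset ℝ)
    (hP : Multiset.card P = n) (hUP : U ≤ P) (m : ℕ) (hm : Multiset.card U = m)
    (hmf : m ≥ n - f) (hne : mmin U < mmax U) :
    dest n f P (mmin U) > mmin U ∨ dest n f P (mmax U) < mmax U := by
  set a := mmin U
  set b := mmax U
  have hlow : P.countP (· < a) ≤ f := by
    have : P.countP (· < a) ≤ card P - card U :=
      countP_le_card_sub_of_le hUP fun x hx => (mmin_le_of_mem hx).not_gt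
    omega
  have hhigh : P.countP (b < ·) ≤ f := by
    have : P.countP (b < ·) ≤ card P - card U :=
      countP_le_card_sub_of_le hUP fun x hx => (le_mmax_of_mem hx).not_gt
    omega
  have ha : a ≤ kth P (2 * f + 1) := le_kth_of_countP_lt (by omega) (by omega) (by omega)
  have hb : kth P (n - 2 * f) ≤ b := kth_le_of_countP_lt (by omega) (by omega) (by omega)
  have hmid : kth P (2 * f + 1) ≤ kth P (n - 2 * f) := kth_mono (by omega) (by omega) (by omega)
  rw [dest, dest, min_eq_left ha, max_eq_right (ha.trans hmid), min_eq_right (hmid.trans hb),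
    max_eq_left hb]
  by_contra! h
  linarith
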